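/- arXiv:math/0611515 — 6 statements merged into one kernel-verified Lean document; each statement's English description precedes it below -/
import Mathlib

section
/- Let Σ be a finite set. The *-embedding relation ≤* on Σ* is a well partial order: for every infinite sequence of words w₀, w₁, w₂, ... over Σ there exist i < j such that wᵢ ≤* wⱼ. -/
/-- `a` is `*`-embedded into `b`: there is a strictly increasing map on positions
preserving letters, such that every position of `b` has a letter-equal position
at or after it in the image. -/
def StarEmbed {α : Type*} (a b : List α) : Prop :=
  ∃ f : Fin a.length → Fin b.length, StrictMono f ∧
    (∀ k : Fin a.length, b.get (f k) = a.get k) ∧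
    (∀ i : Fin b.length, ∃ j : Fin a.length, i ≤ f j ∧ b.get i = b.get (f j))

/-- Annotate each letter of a word with the proposition "this is the last
occurrence of this letter". -/
def ann {A : Type*} : List A → List (A × Prop)
  | [] => []
  | x :: l => (x, x ∉ l) :: ann l

lemma ann_length {A : Type*} (a : List A) : (ann a).length = a.length := by
  induction a with
  | nil => rfl
  | cons x l ih => simp [ann, ih]

lemma ann_getElem {A : Type*} (a : List A) (i : ℕ) (h : i < a.length) :
    (ann a)[i]'(by rw [ann_length]; exact h) =
      (a[i], a[i] ∉ a.drop (i + 1)) := by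
  induction a generalizing i with
  | nil => simp at h
  | cons x l ih =>
    cases i with
    | zero => simp [ann]
    | succ n =>
      have hn : n < l.length := by simpa using h
      simpa [ann] using ih n hn

lemma get_mem_drop {A : Type*} (l : List A) (i : Fin l.length) (n : ℕ) (hn : n ≤ (i : ℕ)) :
    l.get i ∈ l.drop n := by
  have hlen : (i : ℕ) - n < (l.drop n).length := by
    rw [List.length_drop]; omega
  have : (l.drop n)[(i : ℕ) - n]'hlen = l[(i : ℕ)] := by
    rw [List.getElem_drop]; congr 1; omega
  rw [List.get_eq_getElem, ← this]
  exact List.getElem_mem _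

/-- The key combinatorial lemma: if `a` and `b` have the same set of letters and
the annotated word of `a` is a sublist of the annotated word of `b`, then
`a` star-embeds into `b`. -/
lemma starEmbed_of_ann_sublist {A : Type*} {a b : List A}
    (hfin : ∀ x, x ∈ a ↔ x ∈ b) (h : List.Sublist (ann a) (ann b)) : StarEmbed a b := by
  classical
  obtain ⟨f, hf⟩ := List.sublist_iff_exists_fin_orderEmbedding_get_eq.1 h
  set F : Fin a.length → Fin b.length :=
    fun k => (f (k.cast (ann_length a).symm)).cast (ann_length b) with hF
  have key : ∀ k : Fin a.length,
      (a.get k, a.get k ∉ a.drop ((k : ℕ) + 1)) =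
        (b.get (F k), b.get (F k) ∉ b.drop ((F k : ℕ) + 1)) := by
    intro k
    have h1 := hf (k.cast (ann_length a).symm)
    have h2 := ann_getElem a k k.isLt
    have h3 := ann_getElem b (F k) (F k).isLt
    simp only [List.get_eq_getElem, Fin.coe_cast, hF] at h1 h2 h3 ⊢
    rw [h2] at h1
    rw [h1, h3]
  have hletter : ∀ k : Fin a.length, b.get (F k) = a.get k := by
    intro k
    have := congrArg Prod.fst (key k)
    simpa using this.symm
  refine ⟨F, ?_, hletter, ?_⟩
  · intro k k' hkk'
    exact f.strictMono hkk'
  · intro i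
    set c := b.get i with hc
    have hcb : c ∈ b := by rw [hc]; exact List.get_mem b i
    have hca : c ∈ a := (hfin c).2 hcb
    obtain ⟨j0, hj0⟩ := List.mem_iff_get.1 hca
    -- take the last occurrence of `c` in `a`
    set T : Finset (Fin a.length) := Finset.univ.filter (fun j => a.get j = c) with hT
    have hTne : T.Nonempty := ⟨j0, by simp only [hT, Finset.mem_filter, Finset.mem_univ, true_and]; exact hj0⟩
    set j : Fin a.length := T.max' hTne with hj
    have hjc : a.get j = c := by
      have := T.max'_mem hTne
      exact (Finset.mem_filter.1 this).2
    have hjmax : ∀ j' : Fin a.length, a.get j' = c → j' ≤ j := by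
      intro j' hj'
      exact T.le_max' j' (by simp only [hT, Finset.mem_filter, Finset.mem_univ, true_and]; exact hj')
    -- the last-occurrence flag of `j` in `a` is true
    have hflag : a.get j ∉ a.drop ((j : ℕ) + 1) := by
      intro hmem
      obtain ⟨k, hk⟩ := List.mem_iff_get.1 hmem
      have hklen : (j : ℕ) + 1 + (k : ℕ) < a.length := by
        have hk2 : (k : ℕ) < a.length - ((j : ℕ) + 1) := by simpa using k.isLt
        omega
      have hkval : a.get ⟨(j : ℕ) + 1 + (k : ℕ), hklen⟩ = c := by
        have : (a.drop ((j : ℕ) + 1)).get k = a[(j : ℕ) + 1 + (k : ℕ)]'hklen := by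
          simp only [List.get_eq_getElem]
          rw [List.getElem_drop]
        rw [this] at hk
        rw [List.get_eq_getElem]
        rw [hk, hjc]
      have := hjmax _ hkval
      simp only [Fin.le_def] at this
      omega
    -- hence the flag at `F j` in `b` is true
    have hkey := key j
    have hbj : b.get (F j) = c := by rw [hletter]; exact hjc
    have hflagb : b.get (F j) ∉ b.drop ((F j : ℕ) + 1) := by
      have h2 := congrArg Prod.snd (key j)
      simp only at h2
      rw [← h2]
      exact hflag
    refine ⟨j, ?_, by rw [hbj, hc]⟩
    by_contra hlt
    push_neg at hlt
    apply hflagb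
    rw [hbj, hc]
    exact get_mem_drop b i ((F j : ℕ) + 1) (by
      have : (F j : ℕ) < (i : ℕ) := hlt
      omega)

/-- The `*`-embedding relation on words over a finite alphabet is a well
partial order. -/
theorem starEmbed_wpo {A : Type*} [Fintype A] (w : ℕ → List A) :
    ∃ i j : ℕ, i < j ∧ StarEmbed (w i) (w j) := by
  classical
  -- pigeonhole on the set of letters
  obtain ⟨Y, hY⟩ := Finite.exists_infinite_fiber (fun n => {x | x ∈ w n} : ℕ → Set A)
  set p : ℕ → Prop := fun n => {x | x ∈ w n} = Y with hp
  have hinf : (setOf p).Infinite := by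
    rw [Set.infinite_coe_iff] at hY
    exact hY
  -- Higman's lemma for annotated words over the finite alphabet `A × Prop`
  have hPWO : (Set.univ : Set (A × Prop)).PartiallyWellOrderedOn (· = ·) :=
    Set.finite_univ.partiallyWellOrderedOn
  have higman := hPWO.partiallyWellOrderedOn_sublistForall₂ (r := (· = ·))
  obtain ⟨m, n, hmn, hrel⟩ :=
    higman.exists_lt (f := fun k => ann (w (Nat.nth p k))) (fun k => by simp)
  obtain ⟨l, hl1, hl2⟩ := List.sublistForall₂_iff.1 hrel
  rw [List.forall₂_eq_eq_eq] at hl1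
  subst hl1
  refine ⟨Nat.nth p m, Nat.nth p n, (Nat.nth_lt_nth hinf).2 hmn, ?_⟩
  apply starEmbed_of_ann_sublist _ hl2
  intro x
  have h1 : {x | x ∈ w (Nat.nth p m)} = Y := Nat.nth_mem_of_infinite hinf m
  have h2 : {x | x ∈ w (Nat.nth p n)} = Y := Nat.nth_mem_of_infinite hinf n
  rw [← h2] at h1
  simpa using Set.ext_iff.mp h1 x
end

section
/- The *-embedding relation ≤* is a partial order on the set of finite words over any alphabet Σ: it is reflexive, antisymmetric, and transitive. -/
/-! Antisymmetry only needs the first two clauses: a `*`-embedding is in particular a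
sublist embedding, and `List.Sublist` is antisymmetric. -/

namespace StarEmbed

variable {α : Type*}

theorem refl (a : List α) : StarEmbed a a :=
  ⟨id, strictMono_id, fun _ => rfl, fun i => ⟨i, le_rfl, rfl⟩⟩

theorem sublist {a b : List α} (h : StarEmbed a b) : a.Sublist b := by
  obtain ⟨f, hf, hget, -⟩ := h
  exact List.sublist_iff_exists_fin_orderEmbedding_get_eq.mpr
    ⟨OrderEmbedding.ofStrictMono f hf, fun k => (hget k).symm⟩

theorem antisymm {a b : List α} (hab : StarEmbed a b) (hba : StarEmbed b a) : a = b :=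
  hab.sublist.antisymm hba.sublist

theorem trans {a b c : List α} (hab : StarEmbed a b) (hbc : StarEmbed b c) :
    StarEmbed a c := by
  obtain ⟨f, hf, hfget, hfcover⟩ := hab
  obtain ⟨g, hg, hgget, hgcover⟩ := hbc
  refine ⟨g ∘ f, hg.comp hf, fun k => (hgget (f k)).trans (hfget k), fun i => ?_⟩
  obtain ⟨j, hij, hcij⟩ := hgcover i
  obtain ⟨k, hjk, hbjk⟩ := hfcover j
  refine ⟨k, hij.trans (hg.monotone hjk), ?_⟩
  rw [Function.comp_apply, hcij, hgget j, hbjk, hgget (f k)]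

end StarEmbed

/-- The `*`-embedding relation is a partial order on finite words:
reflexive, antisymmetric and transitive. -/
theorem starEmbed_partialOrder {α : Type*} :
    (∀ a : List α, StarEmbed a a) ∧
    (∀ a b : List α, StarEmbed a b → StarEmbed b a → a = b) ∧
    (∀ a b c : List α, StarEmbed a b → StarEmbed b c → StarEmbed a c) :=
  ⟨StarEmbed.refl, fun _ _ => StarEmbed.antisymm, fun _ _ _ => StarEmbed.trans⟩
end

section
/- Let U₀ ⊆ U₁, U₀ ⊆ U₂ be 𝔽₂-vector spaces with quadratic maps Qᵢ : Uᵢ → Vᵢ (i = 0,1,2) agreeing on U₀ (with V₀ ⊆ V₁, V₀ ⊆ V₂), all nondegenerate. Choose complements U'₁, U'₂ of U₀ in U₁, U₂. On U = U₀ ⊕ U'₁ ⊕ U'₂ with values in V = (V₁ ⊕_{V₀} V₂) ⊕ (U'₁ ⊗ U'₂), define Q(u₀ + u'₁ + u'₂) = Q₀(u₀) + Q₁(u'₁) + Q₂(u'₂) + γ₁(u₀,u'₁) + γ₂(u₀,u'₂) + u'₁ ⊗ u'₂. Then Q is a nondegenerate quadratic map, i.e. γ(x,y) = Q(x)+Q(y)+Q(x+y)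 is bilinear and Q(x) = 0 implies x = 0. -/
open TensorProduct

private lemma zmod2_eq_of_one_smul {M : Type*} [AddCommGroup M] [Module (ZMod 2) M]
    {x y : M} (h : (1 : ZMod 2) • x = (1 : ZMod 2) • y) : x = y := by
  simpa using h


/-- The free amalgam of two nondegenerate quadratic structures over a common one
is a nondegenerate quadratic structure.  Here `U₁' = U₁`, `U₂' = U₂` are the chosen
complements of `U₀`, so the original spaces are `U₀ × U₁` and `U₀ × U₂`, `W` is the
amalgamated direct sum of values, `Q₀` the common restriction to `U₀`, and the amalgam
quadratic map is
`Q(u₀+u₁'+u₂') = Q₀ u₀ + Q₁ u₁' + Q₂ u₂' + γ₁(u₀,u₁') + γ₂(u₀,u₂') + u₁' ⊗ u₂'`. -/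
theorem free_amalgam_quadratic_nondegenerate
    {U₀ U₁ U₂ W : Type*}
    [AddCommGroup U₀] [Module (ZMod 2) U₀]
    [AddCommGroup U₁] [Module (ZMod 2) U₁]
    [AddCommGroup U₂] [Module (ZMod 2) U₂]
    [AddCommGroup W] [Module (ZMod 2) W]
    (Q₀ : U₀ → W) (Q₁ : U₀ × U₁ → W) (Q₂ : U₀ × U₂ → W)
    (B₁ : (U₀ × U₁) →ₗ[ZMod 2] (U₀ × U₁) →ₗ[ZMod 2] W)
    (hB₁ : ∀ x y, B₁ x y = Q₁ x + Q₁ y + Q₁ (x + y))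
    (hnd₁ : ∀ x, Q₁ x = 0 → x = 0)
    (B₂ : (U₀ × U₂) →ₗ[ZMod 2] (U₀ × U₂) →ₗ[ZMod 2] W)
    (hB₂ : ∀ x y, B₂ x y = Q₂ x + Q₂ y + Q₂ (x + y))
    (hnd₂ : ∀ x, Q₂ x = 0 → x = 0)
    (hagree₁ : ∀ u : U₀, Q₁ (u, 0) = Q₀ u)
    (hagree₂ : ∀ u : U₀, Q₂ (u, 0) = Q₀ u)
    (Q : U₀ × U₁ × U₂ → W × TensorProduct (ZMod 2) U₁ U₂)
    (hQ : ∀ p : U₀ × U₁ × U₂,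
      Q p = (Q₀ p.1 + Q₁ (0, p.2.1) + Q₂ (0, p.2.2)
              + (Q₁ (p.1, 0) + Q₁ (0, p.2.1) + Q₁ (p.1, p.2.1))
              + (Q₂ (p.1, 0) + Q₂ (0, p.2.2) + Q₂ (p.1, p.2.2)),
            p.2.1 ⊗ₜ[ZMod 2] p.2.2)) :
    (∃ B : (U₀ × U₁ × U₂) →ₗ[ZMod 2] (U₀ × U₁ × U₂) →ₗ[ZMod 2]
        (W × TensorProduct (ZMod 2) U₁ U₂),
      ∀ x y, B x y = Q x + Q y + Q (x + y)) ∧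
    (∀ x, Q x = 0 → x = 0) := by
  set R := ZMod 2
  constructor
  · set p₁ : (U₀ × U₁ × U₂) →ₗ[R] U₀ × U₁ :=
      (LinearMap.fst R U₀ (U₁ × U₂)).prod
        ((LinearMap.fst R U₁ U₂).comp (LinearMap.snd R U₀ (U₁ × U₂))) with hp₁
    set p₂ : (U₀ × U₁ × U₂) →ₗ[R] U₀ × U₂ :=
      (LinearMap.fst R U₀ (U₁ × U₂)).prod
        ((LinearMap.snd R U₁ U₂).comp (LinearMap.snd R U₀ (U₁ × U₂))) with hp₂
    set j : (U₀ × U₁ × U₂) →ₗ[R] U₀ × U₂ :=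
      (LinearMap.fst R U₀ (U₁ × U₂)).prod 0 with hj
    set q₁ : (U₀ × U₁ × U₂) →ₗ[R] U₁ :=
      (LinearMap.fst R U₁ U₂).comp (LinearMap.snd R U₀ (U₁ × U₂)) with hq₁
    set q₂ : (U₀ × U₁ × U₂) →ₗ[R] U₂ :=
      (LinearMap.snd R U₁ U₂).comp (LinearMap.snd R U₀ (U₁ × U₂)) with hq₂
    set bilW : (U₀ × U₁ × U₂) →ₗ[R] (U₀ × U₁ × U₂) →ₗ[R] W :=
      B₁.compl₁₂ p₁ p₁ + B₂.compl₁₂ p₂ p₂ + B₂.compl₁₂ j j with hbilW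
    set bilT : (U₀ × U₁ × U₂) →ₗ[R] (U₀ × U₁ × U₂) →ₗ[R] TensorProduct R U₁ U₂ :=
      ((TensorProduct.mk R U₁ U₂).compl₁₂ q₁ q₂)
        + ((TensorProduct.mk R U₁ U₂).compl₁₂ q₁ q₂).flip with hbilT
    refine ⟨bilW.compr₂ (LinearMap.inl R W (TensorProduct R U₁ U₂))
      + bilT.compr₂ (LinearMap.inr R W (TensorProduct R U₁ U₂)), fun x y => ?_⟩
    have hBval :
        (bilW.compr₂ (LinearMap.inl R W (TensorProduct R U₁ U₂))
          + bilT.compr₂ (LinearMap.inr R W (TensorProduct R U₁ U₂))) x y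
        = (B₁ (x.1, x.2.1) (y.1, y.2.1) + B₂ (x.1, x.2.2) (y.1, y.2.2)
            + B₂ (x.1, 0) (y.1, 0),
           x.2.1 ⊗ₜ[R] y.2.2 + y.2.1 ⊗ₜ[R] x.2.2) := by
      simp [hbilW, hbilT, hp₁, hp₂, hj, hq₁, hq₂, LinearMap.compl₁₂_apply,
        TensorProduct.mk_apply, Prod.ext_iff]
    rw [hBval, hQ, hQ, hQ]
    refine Prod.ext ?_ ?_
    · show B₁ (x.1, x.2.1) (y.1, y.2.1) + B₂ (x.1, x.2.2) (y.1, y.2.2)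
        + B₂ (x.1, 0) (y.1, 0) = _
      rw [hB₁, hB₂, hB₂]
      simp only [Prod.mk_add_mk, Prod.fst_add, Prod.snd_add, add_zero,
        ← hagree₁, ← hagree₂]
      apply zmod2_eq_of_one_smul
      match_scalars <;> decide
    · show x.2.1 ⊗ₜ[R] y.2.2 + y.2.1 ⊗ₜ[R] x.2.2 = _
      simp only [Prod.fst_add, Prod.snd_add, add_tmul, tmul_add]
      apply zmod2_eq_of_one_smul
      match_scalars <;> decide
  · intro x hx
    rw [hQ] at hx
    obtain ⟨hW, hT⟩ := Prod.mk.injEq _ _ _ _ ▸ hx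
    have htz : x.2.1 = 0 ∨ x.2.2 = 0 := by
      by_contra hcon
      push_neg at hcon
      obtain ⟨hb, hc⟩ := hcon
      obtain ⟨f, hf⟩ : ∃ f : Module.Dual (ZMod 2) U₁, f x.2.1 ≠ 0 := by
        by_contra hall; push_neg at hall
        exact hb ((Module.forall_dual_apply_eq_zero_iff (ZMod 2) x.2.1).mp hall)
      obtain ⟨g, hg⟩ : ∃ g : Module.Dual (ZMod 2) U₂, g x.2.2 ≠ 0 := by
        by_contra hall; push_neg at hall
        exact hc ((Module.forall_dual_apply_eq_zero_iff (ZMod 2) x.2.2).mp hall)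
      have := congrArg (TensorProduct.lift
        ((LinearMap.mul (ZMod 2) (ZMod 2)).compl₁₂ f g)) hT
      simp only [TensorProduct.lift.tmul, map_zero, LinearMap.compl₁₂_apply,
        LinearMap.mul_apply'] at this
      exact (mul_ne_zero hf hg) this
    rcases htz with hc | hc
    · rw [hc] at hW
      have : Q₂ (x.1, x.2.2) = 0 := by
        rw [← hW, ← hagree₂ x.1]
        apply zmod2_eq_of_one_smul
        match_scalars <;> decide
      have h0 := hnd₂ _ this
      rw [Prod.mk.injEq] at h0
      have hx0 : x = (0, 0, 0) := Prod.ext h0.1 (Prod.ext hc h0.2)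
      exact hx0
    · rw [hc] at hW
      have : Q₁ (x.1, x.2.1) = 0 := by
        rw [← hW, ← hagree₁ x.1]
        apply zmod2_eq_of_one_smul
        match_scalars <;> decide
      have h0 := hnd₁ _ this
      rw [Prod.mk.injEq] at h0
      have hx0 : x = (0, 0, 0) := Prod.ext h0.1 (Prod.ext h0.2 hc)
      exact hx0
end

section
/- Let G be a group of exponent m, K ≤ Z(G), and M = m + 2. Define αᵢ : G → G^M by αᵢ(g) = (g,...,g,1,g,...,g) (the M-tuple with 1 in the i-th position and g elsewhere), and α : G^M → G^M by α(g₀,...,g_{M-1}) = α₁(g₀)·α₂(g₁)···α_M(g_{M-1}). Suppose G is nilpotent of class 2 with G' ≤ K. Then β = π∘α : G^M → Γ_M (where π : G^M → Γ_M = G^M/(K^M)⁰ is the quotient map) is a group homomorphism. -/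
open scoped commutatorElement

section AppsAux

variable {G : Type*} [Group G] {H : Type*} [CommGroup H] (ι : H →* G)

lemma apps_aux_mul_swap (hcen : ∀ (z : H) (x : G), x * ι z = ι z * x)
    (C : G → G → H) (hC : ∀ x y, ι (C x y) = ⁅x, y⁆) (x y : G) :
    x * y = y * x * ι (C x y) := by
  rw [hcen, hC]
  simp [commutatorElement_def, mul_assoc]

lemma apps_aux_swap (hcen : ∀ (z : H) (x : G), x * ι z = ι z * x)
    (C : G → G → H) (hC : ∀ x y, ι (C x y) = ⁅x, y⁆) :
    ∀ (n : ℕ) (x : G) (a : Fin n → G),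
      x * (List.ofFn a).prod = (List.ofFn a).prod * x * ι (∏ k, C x (a k)) := by
  intro n
  induction n with
  | zero => intro x a; simp
  | succ n ih =>
    intro x a
    rw [List.ofFn_succ, List.prod_cons, Fin.prod_univ_succ, map_mul]
    set T := (List.ofFn fun i : Fin n => a i.succ).prod with hT
    set w0 := ι (C x (a 0)) with hw0
    set W := ι (∏ k : Fin n, C x ((fun i : Fin n => a i.succ) k)) with hW
    have h1 : x * a 0 = a 0 * x * w0 := apps_aux_mul_swap ι hcen C hC x (a 0)
    have h2 : x * T = T * x * W := ih x (fun i : Fin n => a i.succ)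
    calc x * (a 0 * T)
        = (x * a 0) * T := (mul_assoc _ _ _).symm
      _ = (a 0 * x * w0) * T := by rw [h1]
      _ = a 0 * x * (w0 * T) := by rw [mul_assoc]
      _ = a 0 * x * (T * w0) := by rw [← hcen]
      _ = a 0 * (x * T) * w0 := by rw [← mul_assoc, ← mul_assoc, mul_assoc (a 0)]
      _ = a 0 * (T * x * W) * w0 := by rw [h2]
      _ = a 0 * T * x * (W * w0) := by simp only [mul_assoc]
      _ = a 0 * T * x * (w0 * W) := by
          rw [hw0, hW, ← map_mul, ← map_mul, mul_comm (C x (a 0))]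

lemma apps_aux_zip (hcen : ∀ (z : H) (x : G), x * ι z = ι z * x)
    (C : G → G → H) (hC : ∀ x y, ι (C x y) = ⁅x, y⁆) :
    ∀ (n : ℕ) (a b : Fin n → G),
      (List.ofFn (fun i => a i * b i)).prod
        = (List.ofFn a).prod * (List.ofFn b).prod *
          ι (∏ i, ∏ k, if i < k then C (b i) (a k) else 1) := by
  intro n
  induction n with
  | zero => intro a b; simp
  | succ n ih =>
    intro a b
    have hcfull : (∏ i, ∏ k, if i < k then C (b i) (a k) else 1)
        = (∏ k : Fin n, C (b 0) (a k.succ)) *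
          (∏ i : Fin n, ∏ k : Fin n, if i < k then C (b i.succ) (a k.succ) else 1) := by
      rw [Fin.prod_univ_succ]
      congr 1
      · rw [Fin.prod_univ_succ]
        simp [Fin.succ_pos]
      · refine Finset.prod_congr rfl fun i _ => ?_
        rw [Fin.prod_univ_succ]
        simp [Fin.succ_lt_succ_iff]
    rw [List.ofFn_succ, List.ofFn_succ (f := a), List.ofFn_succ (f := b),
      List.prod_cons, List.prod_cons, List.prod_cons, hcfull, map_mul]
    set Pa := (List.ofFn fun i : Fin n => a i.succ).prod with hPa
    set Pb := (List.ofFn fun i : Fin n => b i.succ).prod with hPb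
    set w := ι (∏ k : Fin n, C (b 0) (a k.succ)) with hw
    set c' := ι (∏ i : Fin n, ∏ k : Fin n, if i < k then C (b i.succ) (a k.succ) else 1) with hc'
    have h2 : (List.ofFn fun i : Fin n => a i.succ * b i.succ).prod = Pa * Pb * c' :=
      ih (fun i => a i.succ) (fun i => b i.succ)
    have h3 : b 0 * Pa = Pa * b 0 * w := apps_aux_swap ι hcen C hC n (b 0) (fun i => a i.succ)
    calc (a 0 * b 0) * (List.ofFn fun i : Fin n => a i.succ * b i.succ).prod
        = (a 0 * b 0) * (Pa * Pb * c') := by rw [← h2]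
      _ = a 0 * ((b 0 * Pa) * Pb) * c' := by simp only [mul_assoc]
      _ = a 0 * ((Pa * b 0 * w) * Pb) * c' := by rw [h3]
      _ = a 0 * Pa * (b 0 * (w * Pb)) * c' := by simp only [mul_assoc]
      _ = a 0 * Pa * (b 0 * (Pb * w)) * c' := by rw [← hcen]
      _ = a 0 * Pa * (b 0 * Pb) * (w * c') := by simp only [mul_assoc]

end AppsAux

lemma apps_aux_pow {G : Type*} [Group G] (x y : G)
    (hc : ∀ z : G, z * ⁅x, y⁆ = ⁅x, y⁆ * z) (m : ℕ) (hx : x ^ m = 1) :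
    ⁅x, y⁆ ^ m = 1 := by
  have hxy : x * y = ⁅x, y⁆ * (y * x) := by
    simp [commutatorElement_def, mul_assoc]
  have hcomm1 : Commute x ⁅x, y⁆ := hc x
  have key : ∀ k : ℕ, x ^ k * y = ⁅x, y⁆ ^ k * (y * x ^ k) := by
    intro k
    induction k with
    | zero => simp
    | succ k ih =>
      have hck : x * ⁅x, y⁆ ^ k = ⁅x, y⁆ ^ k * x := (hcomm1.pow_right k).eq
      calc x ^ (k+1) * y = x * (x ^ k * y) := by rw [pow_succ', mul_assoc]
        _ = x * (⁅x, y⁆ ^ k * (y * x ^ k)) := by rw [ih]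
        _ = (x * ⁅x, y⁆ ^ k) * (y * x ^ k) := by rw [mul_assoc]
        _ = ⁅x, y⁆ ^ k * (x * y) * x ^ k := by rw [hck]; simp [mul_assoc]
        _ = ⁅x, y⁆ ^ k * (⁅x, y⁆ * (y * x)) * x ^ k := by rw [hxy]
        _ = ⁅x, y⁆ ^ (k+1) * (y * x ^ (k+1)) := by
            rw [pow_succ, pow_succ']
            simp [mul_assoc]
  have h := key m
  rw [hx, one_mul, mul_one] at h
  exact mul_right_cancel (b := y) (show ⁅x, y⁆ ^ m * y = 1 * y by rw [← h, one_mul])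

/-- Apps' map `β = π ∘ α : G^M → Γ_M` (where `M = m + 2`, `m` the exponent of the
class-2 nilpotent group `G` with `G' ≤ K ≤ Z(G)`) is a group homomorphism:
`α(g·h)` and `α(g)·α(h)` differ by an element of `(K^M)⁰`. -/
theorem apps_beta_homomorphism {G : Type*} [Group G] (m : ℕ)
    (hexp : ∀ g : G, g ^ m = 1)
    (K : Subgroup G) (hK : K ≤ Subgroup.center G)
    (hcomm : ∀ x y : G, ⁅x, y⁆ ∈ K)
    (A : (Fin (m + 2) → G) → (Fin (m + 2) → G))
    (hA : ∀ (g : Fin (m + 2) → G) (j : Fin (m + 2)),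
      A g j = (List.ofFn (fun i : Fin (m + 2) => if j = i then 1 else g i)).prod)
    (Z : Set (Fin (m + 2) → G))
    (hZ : Z = {f : Fin (m + 2) → G | (∀ i, f i ∈ K) ∧ (List.ofFn f).prod = 1}) :
    ∀ g h : Fin (m + 2) → G, A (g * h) * (A g * A h)⁻¹ ∈ Z := by
  intro g h
  letI : CommGroup K :=
    { (inferInstance : Group K) with
      mul_comm := fun a b => Subtype.ext (Subgroup.mem_center_iff.mp (hK b.2) a.1) }
  have hcen : ∀ (z : K) (x : G), x * K.subtype z = K.subtype z * x := fun z x =>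
    Subgroup.mem_center_iff.mp (hK z.2) x
  set C : G → G → K := fun x y => ⟨⁅x, y⁆, hcomm x y⟩ with hCdef
  have hC : ∀ x y, K.subtype (C x y) = ⁅x, y⁆ := fun x y => rfl
  have C_one_left : ∀ y, C 1 y = 1 := fun y => Subtype.ext (commutatorElement_one_left y)
  have C_one_right : ∀ x, C x 1 = 1 := fun x => Subtype.ext (commutatorElement_one_right x)
  set F : Fin (m + 2) → K := fun j =>
    ∏ i, ∏ k, if i < k then C (if j = i then 1 else h i) (if j = k then 1 else g k) else 1
    with hF
  have key : ∀ j, A (g * h) j = A g j * A h j * K.subtype (F j) := by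
    intro j
    rw [hA, hA, hA]
    have hfun : (fun i : Fin (m + 2) => if j = i then (1 : G) else (g * h) i)
        = fun i => (if j = i then 1 else g i) * (if j = i then 1 else h i) := by
      funext i
      rw [Pi.mul_apply]
      split_ifs <;> simp
    rw [hfun]
    exact apps_aux_zip K.subtype hcen C hC (m + 2)
      (fun i => if j = i then 1 else g i) (fun i => if j = i then 1 else h i)
  have hval : ∀ j, (A (g * h) * (A g * A h)⁻¹) j = K.subtype (F j) := by
    intro j
    simp only [Pi.mul_apply, Pi.inv_apply]
    rw [key j, hcen (F j) (A g j * A h j), mul_inv_cancel_right]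
  subst hZ
  refine ⟨fun i => ?_, ?_⟩
  · rw [hval i]
    exact (F i).2
  · have hbig : ∏ j, F j = 1 := by
      have hswap : ∏ j, F j
          = ∏ i, ∏ k, ∏ j : Fin (m + 2),
              (if i < k then C (if j = i then 1 else h i) (if j = k then 1 else g k) else 1) := by
        rw [hF, Finset.prod_comm]
        refine Finset.prod_congr rfl fun i _ => ?_
        exact Finset.prod_comm
      rw [hswap]
      refine Finset.prod_eq_one fun i _ => Finset.prod_eq_one fun k _ => ?_
      by_cases hik : i < k
      · have hne : i ≠ k := ne_of_lt hik
        simp only [if_pos hik]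
        have hfun : (fun j : Fin (m + 2) =>
            C (if j = i then 1 else h i) (if j = k then 1 else g k))
            = fun j => if j = i ∨ j = k then 1 else C (h i) (g k) := by
          funext j
          by_cases h1 : j = i
          · subst h1
            simp [hne, C_one_left]
          · by_cases h2 : j = k
            · subst h2
              simp [h1, C_one_right]
            · simp [h1, h2]
        rw [hfun, Finset.prod_ite (fun _ => (1 : K)) (fun _ => C (h i) (g k)),
          Finset.prod_const_one, one_mul, Finset.prod_const]
        have hcard : (Finset.univ.filter fun j : Fin (m + 2) => ¬(j = i ∨ j = k)).card = m := by
          rw [Finset.filter_not, Finset.card_sdiff_of_subset (Finset.filter_subset _ _)]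
          have h2 : (Finset.univ.filter fun j : Fin (m + 2) => j = i ∨ j = k) = {i, k} := by
            ext j; simp
          rw [h2, Finset.card_univ, Fintype.card_fin,
            Finset.card_insert_of_notMem (by simp [hne]), Finset.card_singleton]
          omega
        rw [hcard]
        apply Subtype.ext
        rw [SubmonoidClass.coe_pow]
        exact apps_aux_pow (h i) (g k)
          (fun z => Subgroup.mem_center_iff.mp (hK (hcomm _ _)) z) m (hexp (h i))
      · simp [hik]
    have hfn : A (g * h) * (A g * A h)⁻¹ = fun j => K.subtype (F j) := funext hval
    rw [hfn]
    have : (List.ofFn fun j => K.subtype (F j)) = (List.ofFn F).map K.subtype := by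
      rw [List.map_ofFn]; rfl
    rw [this, ← map_list_prod, List.prod_ofFn, hbig, map_one]
end

section
/- With G a finite class-2 nilpotent group of exponent m, K with G' ≤ K ≤ Z(G), and M = m+2, the homomorphism β : G^M → Γ_M defined via β = π∘α (α as in the central-product construction) satisfies (K^M)⁰ ≤ ker β, and hence induces an endomorphism β* of Γ_M. Moreover β* is a self-inverse automorphism of Γ_M fixing every element of (the image of) K pointwise. -/
open scoped commutatorElement

set_option linter.unusedSectionVars false
namespace AppsAux
variable {G : Type*} [Group G] {K : Subgroup G}

/-- product of the tuple -/
def Pg {n : ℕ} (g : Fin n → G) : G := (List.ofFn g).prod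

/-- the "delete j-th coordinate" product -/
def Agf {n : ℕ} (g : Fin n → G) (j : Fin n) : G :=
  (List.ofFn fun i : Fin n => if j = i then 1 else g i).prod

section basic

lemma kcomm (hK : K ≤ Subgroup.center G) {x : G} (hx : x ∈ K) (y : G) :
    x * y = y * x := ((Subgroup.mem_center_iff.mp (hK hx)) y).symm

lemma kCommute (hK : K ≤ Subgroup.center G) {x : G} (hx : x ∈ K) (y : G) :
    Commute x y := kcomm hK hx y

lemma Pg_succ {n : ℕ} (g : Fin (n+1) → G) : Pg g = g 0 * Pg (g ∘ Fin.succ) := by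
  rw [Pg, List.ofFn_succ, List.prod_cons]; rfl

lemma Ag_zero {n : ℕ} (g : Fin (n+1) → G) : Agf g 0 = Pg (g ∘ Fin.succ) := by
  rw [Agf, List.ofFn_succ]
  have h : (fun i : Fin n => if (0 : Fin (n+1)) = i.succ then 1 else g i.succ)
      = fun i : Fin n => (g ∘ Fin.succ) i := by
    funext i; rw [if_neg (Ne.symm (Fin.succ_ne_zero i))]; rfl
  rw [h, List.prod_cons, if_pos rfl, one_mul]; rfl

lemma Ag_succ {n : ℕ} (g : Fin (n+1) → G) (j : Fin n) :
    Agf g j.succ = g 0 * Agf (g ∘ Fin.succ) j := by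
  rw [Agf, List.ofFn_succ]
  rw [if_neg (Fin.succ_ne_zero j)]
  have h : (fun i : Fin n => if j.succ = i.succ then 1 else g i.succ)
      = fun i : Fin n => if j = i then 1 else (g ∘ Fin.succ) i := by
    funext i
    simp [Fin.succ_inj, Function.comp]
  rw [h, List.prod_cons]; rfl

end basic

section commcalc
variable (hK : K ≤ Subgroup.center G) (hc : ∀ x y : G, ⁅x, y⁆ ∈ K)
include hK hc

lemma mul_swap (a b : G) : a * b = b * a * ⁅a, b⁆ := by
  rw [← kcomm hK (hc a b) (b * a), commutatorElement_def]
  group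

lemma comm_mul_left (a b y : G) : ⁅a * b, y⁆ = ⁅a, y⁆ * ⁅b, y⁆ := by
  have h1 : ⁅a * b, y⁆ = a * ⁅b, y⁆ * a⁻¹ * ⁅a, y⁆ := by
    simp only [commutatorElement_def]; group
  rw [h1, ← kcomm hK (hc b y) a]
  have h2 : ⁅b, y⁆ * a * a⁻¹ * ⁅a, y⁆ = ⁅b, y⁆ * ⁅a, y⁆ := by group
  rw [h2, kcomm hK (hc b y)]

lemma comm_mul_right (a x y : G) : ⁅a, x * y⁆ = ⁅a, x⁆ * ⁅a, y⁆ := by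
  have h1 : ⁅a, x * y⁆ = ⁅a, x⁆ * (x * ⁅a, y⁆ * x⁻¹) := by
    simp only [commutatorElement_def]; group
  rw [h1, ← kcomm hK (hc a y) x]
  group

lemma comm_inv_left (a y : G) : ⁅a⁻¹, y⁆ = ⁅a, y⁆⁻¹ := by
  have h := comm_mul_left hK hc a a⁻¹ y
  rw [mul_inv_cancel] at h
  have h0 : ⁅(1 : G), y⁆ = 1 := by simp only [commutatorElement_def]; group
  rw [h0] at h
  exact eq_inv_of_mul_eq_one_right h.symm

lemma comm_inv_right (a y : G) : ⁅a, y⁻¹⁆ = ⁅a, y⁆⁻¹ := by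
  have h := comm_mul_right hK hc a y y⁻¹
  rw [mul_inv_cancel] at h
  have h0 : ⁅a, (1 : G)⁆ = 1 := by simp only [commutatorElement_def]; group
  rw [h0] at h
  exact eq_inv_of_mul_eq_one_right h.symm

lemma comm_pow_left (a y : G) (k : ℕ) : ⁅a ^ k, y⁆ = ⁅a, y⁆ ^ k := by
  induction k with
  | zero => simp only [pow_zero, commutatorElement_def]; group
  | succ k ih => rw [pow_succ, comm_mul_left hK hc, ih, pow_succ]

lemma comm_pow_right (a y : G) (k : ℕ) : ⁅a, y ^ k⁆ = ⁅a, y⁆ ^ k := by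
  induction k with
  | zero => simp only [pow_zero, commutatorElement_def]; group
  | succ k ih => rw [pow_succ, comm_mul_right hK hc, ih, pow_succ]

lemma comm_Kleft {x : G} (hx : x ∈ K) (y : G) : ⁅x, y⁆ = 1 := by
  rw [commutatorElement_def, kcomm hK hx y]; group

lemma comm_Kright {y : G} (x : G) (hy : y ∈ K) : ⁅x, y⁆ = 1 := by
  rw [commutatorElement_def, ← kcomm hK hy x]; group

lemma comm_self (a : G) : ⁅a, a⁆ = 1 := by
  rw [commutatorElement_def]; group

lemma comm_prod_left {n : ℕ} (g : Fin n → G) (y : G) :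
    ⁅Pg g, y⁆ = (List.ofFn fun t : Fin n => ⁅g t, y⁆).prod := by
  induction n with
  | zero =>
    simp only [Pg, List.ofFn_zero, List.prod_nil]
    rw [show ⁅(1:G), y⁆ = 1 by rw [commutatorElement_def]; group]
  | succ n ih =>
    rw [Pg_succ, comm_mul_left hK hc, List.ofFn_succ, List.prod_cons, ih (g ∘ Fin.succ)]
    rfl

/-- class-2 binomial theorem -/
lemma mul_pow_comm2 (a b : G) (k : ℕ) :
    (a * b) ^ k = a ^ k * b ^ k * ⁅b, a⁆ ^ (∑ i ∈ Finset.range k, i) := by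
  induction k with
  | zero => simp
  | succ k ih =>
    rw [Finset.sum_range_succ, pow_succ (a * b), ih]
    have h1 : b ^ k * a = a * b ^ k * ⁅b, a⁆ ^ k := by
      rw [mul_swap hK hc (b ^ k) a, comm_pow_left hK hc]
    calc (a ^ k * b ^ k * ⁅b, a⁆ ^ (∑ i ∈ Finset.range k, i)) * (a * b)
        = a ^ k * b ^ k * (⁅b, a⁆ ^ (∑ i ∈ Finset.range k, i) * (a * b)) := by group
      _ = a ^ k * b ^ k * ((a * b) * ⁅b, a⁆ ^ (∑ i ∈ Finset.range k, i)) := by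
          rw [kcomm hK (pow_mem (hc b a) _) (a * b)]
      _ = a ^ k * (b ^ k * a) * (b * ⁅b, a⁆ ^ (∑ i ∈ Finset.range k, i)) := by group
      _ = a ^ k * (a * b ^ k * ⁅b, a⁆ ^ k) * (b * ⁅b, a⁆ ^ (∑ i ∈ Finset.range k, i)) := by
          rw [h1]
      _ = a ^ (k + 1) * b ^ k * ((⁅b, a⁆ ^ k * b) * ⁅b, a⁆ ^ (∑ i ∈ Finset.range k, i)) := by
          rw [pow_succ]; group
      _ = a ^ (k + 1) * b ^ k * ((b * ⁅b, a⁆ ^ k) * ⁅b, a⁆ ^ (∑ i ∈ Finset.range k, i)) := by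
          rw [kcomm hK (pow_mem (hc b a) _) b]
      _ = a ^ (k + 1) * b ^ (k + 1) * (⁅b, a⁆ ^ k * ⁅b, a⁆ ^ (∑ i ∈ Finset.range k, i)) := by
          rw [pow_succ]; group
      _ = a ^ (k + 1) * b ^ (k + 1) * ⁅b, a⁆ ^ ((∑ i ∈ Finset.range k, i) + k) := by
          rw [← pow_add, Nat.add_comm k (∑ i ∈ Finset.range k, i)]
end commcalc

section listlemmas
variable (hK : K ≤ Subgroup.center G) (hc : ∀ x y : G, ⁅x, y⁆ ∈ K)

lemma prod_ofFn_succ {n : ℕ} (f : Fin (n+1) → G) :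
    (List.ofFn f).prod = f 0 * (List.ofFn (f ∘ Fin.succ)).prod := by
  rw [List.ofFn_succ, List.prod_cons]; rfl

lemma prodK {n : ℕ} {f : Fin n → G} (hf : ∀ t, f t ∈ K) :
    (List.ofFn f).prod ∈ K := by
  refine Subgroup.list_prod_mem _ (fun x hx => ?_)
  obtain ⟨i, rfl⟩ := List.mem_ofFn.mp hx
  exact hf i

lemma prod_pow_ofFn {n : ℕ} (x : G) (e : Fin n → ℕ) :
    (List.ofFn fun t => x ^ e t).prod = x ^ (∑ t, e t) := by
  induction n with
  | zero => simp
  | succ n ih =>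
    rw [prod_ofFn_succ (fun t => x ^ e t),
      show ((fun t => x ^ e t) ∘ Fin.succ) = fun t : Fin n => x ^ (e ∘ Fin.succ) t from rfl,
      ih (e ∘ Fin.succ), Fin.sum_univ_succ, pow_add]
    rfl

include hK in
lemma LK2 {n : ℕ} {u : Fin n → G} (v : Fin n → G) (hu : ∀ t, u t ∈ K) :
    (List.ofFn fun t => u t * v t).prod = (List.ofFn u).prod * (List.ofFn v).prod := by
  induction n with
  | zero => simp
  | succ n ih =>
    have hU : (List.ofFn (u ∘ Fin.succ)).prod ∈ K := prodK (fun t => hu t.succ)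
    rw [prod_ofFn_succ (fun t => u t * v t),
      show ((fun t => u t * v t) ∘ Fin.succ)
        = fun t : Fin n => (u ∘ Fin.succ) t * (v ∘ Fin.succ) t from rfl,
      ih (u := u ∘ Fin.succ) (v ∘ Fin.succ) (fun t => hu t.succ), prod_ofFn_succ u, prod_ofFn_succ v]
    calc u 0 * v 0 * ((List.ofFn (u ∘ Fin.succ)).prod * (List.ofFn (v ∘ Fin.succ)).prod)
        = u 0 * (v 0 * (List.ofFn (u ∘ Fin.succ)).prod) * (List.ofFn (v ∘ Fin.succ)).prod := by
          group
      _ = u 0 * ((List.ofFn (u ∘ Fin.succ)).prod * v 0) * (List.ofFn (v ∘ Fin.succ)).prod := by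
          rw [← kcomm hK hU (v 0)]
      _ = _ := by group

include hK in
lemma LK3 {n : ℕ} {f : Fin n → G} (hf : ∀ t, f t ∈ K) :
    (List.ofFn fun t => (f t)⁻¹).prod = ((List.ofFn f).prod)⁻¹ := by
  induction n with
  | zero => simp
  | succ n ih =>
    rw [prod_ofFn_succ (fun t => (f t)⁻¹),
      show ((fun t => (f t)⁻¹) ∘ Fin.succ) = fun t : Fin n => ((f ∘ Fin.succ) t)⁻¹ from rfl,
      ih (f := f ∘ Fin.succ) (fun t => hf t.succ), prod_ofFn_succ f, mul_inv_rev,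
      kcomm hK (inv_mem (hf 0)) (((List.ofFn (f ∘ Fin.succ)).prod)⁻¹)]

include hK in
lemma LK4 {n : ℕ} {f : Fin n → G} (hf : ∀ t, f t ∈ K) (k : ℕ) :
    (List.ofFn fun t => f t ^ k).prod = ((List.ofFn f).prod) ^ k := by
  induction n with
  | zero => simp
  | succ n ih =>
    have hcm : Commute (f 0) ((List.ofFn (f ∘ Fin.succ)).prod) :=
      kcomm hK (hf 0) ((List.ofFn (f ∘ Fin.succ)).prod)
    rw [prod_ofFn_succ (fun t => f t ^ k),
      show ((fun t => f t ^ k) ∘ Fin.succ) = fun t : Fin n => (f ∘ Fin.succ) t ^ k from rfl,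
      ih (f := f ∘ Fin.succ) (fun t => hf t.succ), prod_ofFn_succ f, hcm.mul_pow]

include hK in
lemma LcA {n : ℕ} {g : Fin n → G} (hg : ∀ i, g i ∈ K) (j : Fin n) :
    Agf g j * g j = Pg g := by
  induction n with
  | zero => exact j.elim0
  | succ n ih =>
    refine Fin.cases ?_ (fun j' => ?_) j
    · rw [Ag_zero, Pg_succ, ← kcomm hK (hg 0) (Pg (g ∘ Fin.succ))]
    · rw [Ag_succ, Pg_succ, mul_assoc,
        show g j'.succ = (g ∘ Fin.succ) j' from rfl,
        ih (g := g ∘ Fin.succ) (fun i => hg i.succ) j']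

include hK hc in
lemma F5 {n : ℕ} (g : Fin n → G) (j : Fin n) :
    ∃ d ∈ K, Agf g j = Pg g * (g j)⁻¹ * d := by
  induction n with
  | zero => exact j.elim0
  | succ n ih =>
    refine Fin.cases ?_ (fun j' => ?_) j
    · refine ⟨⁅g 0, (Pg (g ∘ Fin.succ))⁻¹⁆, hc _ _, ?_⟩
      rw [Ag_zero, Pg_succ, commutatorElement_def]
      group
    · obtain ⟨d, hd, hEq⟩ := ih (g ∘ Fin.succ) j'
      refine ⟨d, hd, ?_⟩
      rw [Ag_succ, hEq, Pg_succ, show g j'.succ = (g ∘ Fin.succ) j' from rfl]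
      group

include hK hc in
lemma Lmove {n : ℕ} (a : G) (b : Fin n → G) :
    (List.ofFn fun t => a * b t).prod
      = a ^ n * (List.ofFn b).prod
        * (List.ofFn fun t : Fin n => ⁅b t, a⁆ ^ (n - 1 - (t : ℕ))).prod := by
  induction n with
  | zero => simp
  | succ n ih =>
    rw [prod_ofFn_succ (fun t => a * b t),
      show ((fun t => a * b t) ∘ Fin.succ) = fun t : Fin n => a * (b ∘ Fin.succ) t from rfl,
      ih (b ∘ Fin.succ), prod_ofFn_succ b,
      prod_ofFn_succ (fun t : Fin (n+1) => ⁅b t, a⁆ ^ (n + 1 - 1 - (t : ℕ)))]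
    have hexps : ((fun t : Fin (n+1) => ⁅b t, a⁆ ^ (n + 1 - 1 - (t : ℕ))) ∘ Fin.succ)
        = fun t : Fin n => ⁅(b ∘ Fin.succ) t, a⁆ ^ (n - 1 - (t : ℕ)) := by
      funext t
      show ⁅b t.succ, a⁆ ^ (n + 1 - 1 - ((t.succ : Fin (n+1)) : ℕ)) = _
      have : n + 1 - 1 - ((t.succ : Fin (n+1)) : ℕ) = n - 1 - (t : ℕ) := by
        rw [Fin.val_succ]; omega
      rw [this]; rfl
    rw [hexps]
    set B := (List.ofFn (b ∘ Fin.succ)).prod with hB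
    set C := (List.ofFn fun t : Fin n => ⁅(b ∘ Fin.succ) t, a⁆ ^ (n - 1 - (t : ℕ))).prod with hC
    have h0 : (((0 : Fin (n+1))) : ℕ) = 0 := rfl
    rw [h0, Nat.sub_zero, Nat.add_sub_cancel]
    calc a * b 0 * (a ^ n * B * C)
        = a * (b 0 * a ^ n) * (B * C) := by group
      _ = a * (a ^ n * b 0 * ⁅b 0, a⁆ ^ n) * (B * C) := by
          rw [mul_swap hK hc (b 0) (a ^ n), comm_pow_right hK hc]
      _ = a ^ (n + 1) * b 0 * (⁅b 0, a⁆ ^ n * B) * C := by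
          rw [pow_succ']; group
      _ = a ^ (n + 1) * b 0 * (B * ⁅b 0, a⁆ ^ n) * C := by
          rw [kcomm hK (pow_mem (hc (b 0) a) n) B]
      _ = a ^ (n + 1) * (b 0 * B) * (⁅b 0, a⁆ ^ n * C) := by group

end listlemmas

/-- product of all the deleted products -/
def Sg {n : ℕ} (g : Fin n → G) : G := (List.ofFn fun j => Agf g j).prod

/-- the commutator correction term -/
def Phi {n : ℕ} (g : Fin n → G) : G :=
  (List.ofFn fun t : Fin n => ⁅g t, Pg g⁆ ^ (t : ℕ)).prod

section sigma
variable (hK : K ≤ Subgroup.center G) (hc : ∀ x y : G, ⁅x, y⁆ ∈ K)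

include hK hc in
lemma PhiK {n : ℕ} (g : Fin n → G) : Phi g ∈ K :=
  prodK (fun t => pow_mem (hc _ _) _)

include hK hc in
lemma Sigma {n : ℕ} (g : Fin n → G) : Pg g * Sg g = (Pg g) ^ n * Phi g := by
  induction n with
  | zero => simp [Sg, Phi, Pg]
  | succ n ih =>
    -- notation
    have hP : Pg g = g 0 * Pg (g ∘ Fin.succ) := Pg_succ g
    -- decomposition of Sg g
    have hS1 : Sg g = Pg (g ∘ Fin.succ)
        * (List.ofFn fun t : Fin n => g 0 * Agf (g ∘ Fin.succ) t).prod := by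
      rw [Sg, prod_ofFn_succ (fun j : Fin (n+1) => Agf g j), Ag_zero,
        show ((fun j : Fin (n+1) => Agf g j) ∘ Fin.succ)
          = fun t : Fin n => g 0 * Agf (g ∘ Fin.succ) t from funext fun t => Ag_succ g t]
    have hS2 : Sg g = Pg (g ∘ Fin.succ) * (g 0 ^ n * Sg (g ∘ Fin.succ)
        * (List.ofFn fun t : Fin n =>
            ⁅Agf (g ∘ Fin.succ) t, g 0⁆ ^ (n - 1 - (t : ℕ))).prod) := by
      rw [hS1, Lmove hK hc (g 0) (fun t => Agf (g ∘ Fin.succ) t)]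
      rfl
    -- the correction product D
    have hD0 : (fun t : Fin n => ⁅Agf (g ∘ Fin.succ) t, g 0⁆ ^ (n - 1 - (t : ℕ)))
        = fun t : Fin n => (⁅Pg (g ∘ Fin.succ), g 0⁆ * ⁅(g ∘ Fin.succ) t, g 0⁆⁻¹)
            ^ (n - 1 - (t : ℕ)) := by
      funext t
      obtain ⟨d, hd, he⟩ := F5 hK hc (g ∘ Fin.succ) t
      rw [he, comm_mul_left hK hc, comm_mul_left hK hc, comm_Kleft hK hc hd, mul_one,
        comm_inv_left hK hc]
    have hD1 : (List.ofFn fun t : Fin n => (⁅Pg (g ∘ Fin.succ), g 0⁆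
          * ⁅(g ∘ Fin.succ) t, g 0⁆⁻¹) ^ (n - 1 - (t : ℕ))).prod
        = ⁅Pg (g ∘ Fin.succ), g 0⁆ ^ (∑ i ∈ Finset.range n, i)
          * (List.ofFn fun t : Fin n =>
              (⁅(g ∘ Fin.succ) t, g 0⁆⁻¹) ^ (n - 1 - (t : ℕ))).prod := by
      rw [show (fun t : Fin n => (⁅Pg (g ∘ Fin.succ), g 0⁆
            * ⁅(g ∘ Fin.succ) t, g 0⁆⁻¹) ^ (n - 1 - (t : ℕ)))
          = fun t : Fin n => ⁅Pg (g ∘ Fin.succ), g 0⁆ ^ (n - 1 - (t : ℕ))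
            * (⁅(g ∘ Fin.succ) t, g 0⁆⁻¹) ^ (n - 1 - (t : ℕ)) from
          funext fun t => (kCommute hK (hc _ _) _).mul_pow _,
        LK2 hK _ (fun t => pow_mem (hc _ _) _),
        prod_pow_ofFn (⁅Pg (g ∘ Fin.succ), g 0⁆) (fun t : Fin n => n - 1 - (t : ℕ)),
        show (∑ t : Fin n, (n - 1 - (t : ℕ))) = ∑ i ∈ Finset.range n, i from by
          rw [Fin.sum_univ_eq_sum_range (fun i => n - 1 - i) n]
          exact Finset.sum_range_reflect (fun i => i) n]
    -- decomposition of Phi g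
    have hPhi0 : ((fun t : Fin (n+1) => ⁅g t, Pg g⁆ ^ (t : ℕ)) ∘ Fin.succ)
        = fun t : Fin n => ⁅(g ∘ Fin.succ) t, g 0⁆ ^ ((t : ℕ) + 1)
          * ⁅(g ∘ Fin.succ) t, Pg (g ∘ Fin.succ)⁆ ^ ((t : ℕ) + 1) := by
      funext t
      show ⁅g t.succ, Pg g⁆ ^ ((t.succ : Fin (n+1)) : ℕ) = _
      rw [Fin.val_succ, hP, comm_mul_right hK hc,
        (kCommute hK (hc _ _) _).mul_pow]
      rfl
    have hPhi1 : Phi g = (List.ofFn fun t : Fin n =>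
        ⁅(g ∘ Fin.succ) t, g 0⁆ ^ ((t : ℕ) + 1)
          * ⁅(g ∘ Fin.succ) t, Pg (g ∘ Fin.succ)⁆ ^ ((t : ℕ) + 1)).prod := by
      rw [Phi, prod_ofFn_succ (fun t : Fin (n+1) => ⁅g t, Pg g⁆ ^ (t : ℕ)),
        show (((0 : Fin (n+1)) : ℕ)) = 0 from rfl, pow_zero, one_mul, hPhi0]
    have hXa0 : (fun t : Fin n => ⁅(g ∘ Fin.succ) t, g 0⁆ ^ ((t : ℕ) + 1))
        = fun t : Fin n => (⁅(g ∘ Fin.succ) t, g 0⁆⁻¹) ^ (n - 1 - (t : ℕ))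
          * ⁅(g ∘ Fin.succ) t, g 0⁆ ^ n := by
      funext t
      have ht : (n - 1 - (t : ℕ)) + ((t : ℕ) + 1) = n := by
        have := t.isLt; omega
      have hx : ⁅(g ∘ Fin.succ) t, g 0⁆ ^ (n - 1 - (t : ℕ))
          * ⁅(g ∘ Fin.succ) t, g 0⁆ ^ ((t : ℕ) + 1) = ⁅(g ∘ Fin.succ) t, g 0⁆ ^ n := by
        rw [← pow_add, ht]
      rw [inv_pow, ← hx, inv_mul_cancel_left]
    have hXp0 : (fun t : Fin n => ⁅(g ∘ Fin.succ) t, Pg (g ∘ Fin.succ)⁆ ^ ((t : ℕ) + 1))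
        = fun t : Fin n => ⁅(g ∘ Fin.succ) t, Pg (g ∘ Fin.succ)⁆ ^ (t : ℕ)
          * ⁅(g ∘ Fin.succ) t, Pg (g ∘ Fin.succ)⁆ :=
      funext fun t => by rw [pow_succ]
    have hPhi2 : Phi g = ((List.ofFn fun t : Fin n =>
          (⁅(g ∘ Fin.succ) t, g 0⁆⁻¹) ^ (n - 1 - (t : ℕ))).prod
        * ⁅Pg (g ∘ Fin.succ), g 0⁆ ^ n) * (Phi (g ∘ Fin.succ) * 1) := by
      rw [hPhi1, LK2 hK _ (fun t => pow_mem (hc _ _) _)]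
      congr 1
      · rw [hXa0, LK2 hK _ (fun t => pow_mem (inv_mem (hc _ _)) _),
          LK4 hK (fun t => hc _ _) n, ← comm_prod_left hK hc]
      · rw [hXp0, LK2 hK _ (fun t => pow_mem (hc _ _) _), ← comm_prod_left hK hc,
          comm_self hK hc]
        rfl
    -- final assembly
    have hSg' : Sg (g ∘ Fin.succ) = (Pg (g ∘ Fin.succ))⁻¹
        * (Pg (g ∘ Fin.succ) ^ n * Phi (g ∘ Fin.succ)) := by
      rw [← ih]; group
    rw [hP, hS2, hD0, hD1, hSg', hPhi2, mul_pow_comm2 hK hc, Finset.sum_range_succ]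
    set a := g 0 with ha
    set P := Pg (g ∘ Fin.succ) with hPd
    set F := Phi (g ∘ Fin.succ) with hF
    set D := (List.ofFn fun t : Fin n =>
      (⁅(g ∘ Fin.succ) t, g 0⁆⁻¹) ^ (n - 1 - (t : ℕ))).prod with hD
    set E := ∑ i ∈ Finset.range n, i with hE
    have hFK : F ∈ K := PhiK hK hc _
    have hDK : D ∈ K := prodK (fun t => pow_mem (inv_mem (hc _ _)) _)
    have swc : ∀ (y x : G), ⁅P, a⁆ ^ n * (y * x) = y * (⁅P, a⁆ ^ n * x) := fun y x => by
      rw [← mul_assoc, kcomm hK (pow_mem (hc P a) n) y, mul_assoc]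
    have sw1 : P * a ^ n = a ^ n * (P * ⁅P, a⁆ ^ n) := by
      rw [mul_swap hK hc P (a ^ n), comm_pow_right hK hc, mul_assoc]
    have hword : ⁅P, a⁆ ^ n * (⁅P, a⁆ ^ n * (F * (⁅P, a⁆ ^ E * D)))
        = ⁅P, a⁆ ^ (E + n) * ((D * ⁅P, a⁆ ^ n) * (F * 1)) := by
      rw [mul_one,
        show F * (⁅P, a⁆ ^ E * D) = ⁅P, a⁆ ^ E * (D * F) from by
          rw [← mul_assoc, kcomm hK hFK (⁅P, a⁆ ^ E), mul_assoc, kcomm hK hFK D],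
        show D * ⁅P, a⁆ ^ n = ⁅P, a⁆ ^ n * D from kcomm hK hDK (⁅P, a⁆ ^ n),
        ← mul_assoc, ← mul_assoc, ← pow_add, ← pow_add,
        show (D * F : G) = D * F from rfl]
      rw [mul_assoc (⁅P, a⁆ ^ n) D F, ← mul_assoc (⁅P, a⁆ ^ (E + n)), ← pow_add,
        show n + n + E = E + n + n from by omega]
    calc (a * P) * (P * ((a ^ n * (P⁻¹ * (P ^ n * F))) * (⁅P, a⁆ ^ E * D)))
        = a * (P * (P * a ^ n)) * (P⁻¹ * (P ^ n * (F * (⁅P, a⁆ ^ E * D)))) := by group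
      _ = a * (P * (a ^ n * (P * ⁅P, a⁆ ^ n)))
          * (P⁻¹ * (P ^ n * (F * (⁅P, a⁆ ^ E * D)))) := by rw [sw1]
      _ = a * ((P * a ^ n) * (P * ⁅P, a⁆ ^ n))
          * (P⁻¹ * (P ^ n * (F * (⁅P, a⁆ ^ E * D)))) := by group
      _ = a * ((a ^ n * (P * ⁅P, a⁆ ^ n)) * (P * ⁅P, a⁆ ^ n))
          * (P⁻¹ * (P ^ n * (F * (⁅P, a⁆ ^ E * D)))) := by rw [sw1]
      _ = a * (a ^ n * (P * (⁅P, a⁆ ^ n * (P * (⁅P, a⁆ ^ n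
          * (P⁻¹ * (P ^ n * (F * (⁅P, a⁆ ^ E * D))))))))) := by group
      _ = a * (a ^ n * (P * (P * (⁅P, a⁆ ^ n * (⁅P, a⁆ ^ n
          * (P⁻¹ * (P ^ n * (F * (⁅P, a⁆ ^ E * D))))))))) := by rw [swc P]
      _ = a * (a ^ n * (P * (P * (⁅P, a⁆ ^ n * (P⁻¹ * (⁅P, a⁆ ^ n
          * (P ^ n * (F * (⁅P, a⁆ ^ E * D))))))))) := by rw [swc P⁻¹]
      _ = a * (a ^ n * (P * (P * (P⁻¹ * (⁅P, a⁆ ^ n * (⁅P, a⁆ ^ n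
          * (P ^ n * (F * (⁅P, a⁆ ^ E * D))))))))) := by rw [swc P⁻¹]
      _ = a * (a ^ n * (P * (P * (P⁻¹ * (⁅P, a⁆ ^ n * (P ^ n * (⁅P, a⁆ ^ n
          * (F * (⁅P, a⁆ ^ E * D))))))))) := by rw [swc (P ^ n)]
      _ = a * (a ^ n * (P * (P * (P⁻¹ * (P ^ n * (⁅P, a⁆ ^ n * (⁅P, a⁆ ^ n
          * (F * (⁅P, a⁆ ^ E * D))))))))) := by rw [swc (P ^ n)]
      _ = a ^ (n+1) * P ^ (n+1) * (⁅P, a⁆ ^ n * (⁅P, a⁆ ^ n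
          * (F * (⁅P, a⁆ ^ E * D)))) := by group
      _ = a ^ (n+1) * P ^ (n+1) * (⁅P, a⁆ ^ (E + n) * ((D * ⁅P, a⁆ ^ n) * (F * 1))) := by
          rw [hword]
      _ = a ^ (n+1) * P ^ (n+1) * ⁅P, a⁆ ^ (E + n) * ((D * ⁅P, a⁆ ^ n) * (F * 1)) := by
          group
end sigma

section factor
variable (hK : K ≤ Subgroup.center G) (hc : ∀ x y : G, ⁅x, y⁆ ∈ K)

include hK in
lemma Lfactor {n : ℕ} (x y : Fin n → G) (h : ∀ k, x k * (y k)⁻¹ ∈ K) :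
    (List.ofFn fun k => x k * (y k)⁻¹).prod
      = (List.ofFn x).prod * ((List.ofFn y).prod)⁻¹ := by
  induction n with
  | zero => simp
  | succ n ih =>
    have ihs := ih (x ∘ Fin.succ) (y ∘ Fin.succ) (fun t => h t.succ)
    have hQ : (List.ofFn (x ∘ Fin.succ)).prod * ((List.ofFn (y ∘ Fin.succ)).prod)⁻¹ ∈ K := by
      rw [← ihs]; exact prodK (fun t => h t.succ)
    rw [prod_ofFn_succ (fun k => x k * (y k)⁻¹),
      show ((fun k => x k * (y k)⁻¹) ∘ Fin.succ)
        = fun t : Fin n => (x ∘ Fin.succ) t * ((y ∘ Fin.succ) t)⁻¹ from rfl,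
      ihs, prod_ofFn_succ x, prod_ofFn_succ y, mul_inv_rev]
    calc x 0 * (y 0)⁻¹
          * ((List.ofFn (x ∘ Fin.succ)).prod * ((List.ofFn (y ∘ Fin.succ)).prod)⁻¹)
        = x 0 * ((y 0)⁻¹
          * ((List.ofFn (x ∘ Fin.succ)).prod * ((List.ofFn (y ∘ Fin.succ)).prod)⁻¹)) := by
          group
      _ = x 0 * (((List.ofFn (x ∘ Fin.succ)).prod * ((List.ofFn (y ∘ Fin.succ)).prod)⁻¹)
          * (y 0)⁻¹) := by rw [← kcomm hK hQ ((y 0)⁻¹)]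
      _ = x 0 * (List.ofFn (x ∘ Fin.succ)).prod
          * (((List.ofFn (y ∘ Fin.succ)).prod)⁻¹ * (y 0)⁻¹) := by group

end factor

end AppsAux

open AppsAux in
/-- Apps' homomorphism `β : G^M → Γ_M` (`M = m + 2`) satisfies `(K^M)⁰ ≤ ker β`,
hence induces an endomorphism `β*` of `Γ_M = G^M/(K^M)⁰`; moreover `β*` is a
self-inverse automorphism fixing the image of `K` (embedded via a coordinate)
pointwise. -/
theorem apps_beta_selfinverse_automorphism {G : Type*} [Group G] (m : ℕ)
    (hexp : ∀ g : G, g ^ m = 1)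
    (K : Subgroup G) (hK : K ≤ Subgroup.center G)
    (hcomm : ∀ x y : G, ⁅x, y⁆ ∈ K)
    (A : (Fin (m + 2) → G) → (Fin (m + 2) → G))
    (hA : ∀ (g : Fin (m + 2) → G) (j : Fin (m + 2)),
      A g j = (List.ofFn (fun i : Fin (m + 2) => if j = i then 1 else g i)).prod)
    (Z : Set (Fin (m + 2) → G))
    (hZ : Z = {f : Fin (m + 2) → G | (∀ i, f i ∈ K) ∧ (List.ofFn f).prod = 1}) :
    (∀ f ∈ Z, A f ∈ Z) ∧
    (∀ g : Fin (m + 2) → G, A (A g) * g⁻¹ ∈ Z) ∧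
    (∀ k : G, k ∈ K →
      A (Pi.mulSingle (0 : Fin (m + 2)) k)
        * (Pi.mulSingle (0 : Fin (m + 2)) k)⁻¹ ∈ Z) := by
  refine ⟨?_, ?_, ?_⟩
  · -- Part 1 : A maps Z into Z
    intro f hf
    rw [hZ] at hf ⊢
    obtain ⟨hf1, hf2⟩ := hf
    have hfA : A f = fun j => Agf f j := funext fun j => hA f j
    constructor
    · intro i
      rw [hA f i]
      refine prodK (fun t => ?_)
      split
      · exact one_mem K
      · exact hf1 t
    · rw [hfA]
      have he : ∀ j, Agf f j = (f j)⁻¹ := fun j => by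
        have h1 := LcA hK hf1 j
        rw [show Pg f = 1 from hf2] at h1
        exact eq_inv_of_mul_eq_one_left h1
      rw [show (fun j => Agf f j) = fun j => (f j)⁻¹ from funext he,
        LK3 hK hf1, show (List.ofFn f).prod = 1 from hf2, inv_one]
  · -- Part 2 : A ∘ A is the identity modulo Z
    intro g
    rw [hZ]
    have hAg : A g = fun j => Agf g j := funext fun j => hA g j
    have hAAg : ∀ k, A (A g) k = Agf (fun j => Agf g j) k := fun k => by
      rw [hA (A g) k, hAg]; rfl
    -- `Pg (fun j => Agf g j)` is definitionally `Sg g`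
    have hP2 : Pg g * Pg (fun j => Agf g j) = Pg g ^ (m+2) * Phi g := Sigma hK hcomm g
    have hPm : (Pg g) ^ m = 1 := hexp _
    have hΦK : Phi g ∈ K := PhiK hK hcomm g
    have hPh : Pg (fun j => Agf g j) = Pg g * Phi g := by
      have h1 : Pg g * Pg (fun j => Agf g j) = Pg g * (Pg g * Phi g) := by
        rw [hP2, pow_succ, pow_succ, hPm, one_mul, mul_assoc]
      exact mul_left_cancel h1
    have hΦm : Phi g ^ m = 1 := by
      rw [Phi, ← LK4 hK (fun t => pow_mem (hcomm _ _) _) m,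
        show (fun t : Fin (m+2) => (⁅g t, Pg g⁆ ^ (t : ℕ)) ^ m) = fun _ => (1 : G) from
          funext fun t => by
            rw [← pow_mul, mul_comm ((t : ℕ)) m, pow_mul, ← comm_pow_left hK hcomm, hexp (g t),
              show ⁅(1:G), Pg g⁆ = 1 from by rw [commutatorElement_def]; group, one_pow]]
      simp
    have hPhih : Phi (fun j => Agf g j) = (Phi g)⁻¹ := by
      rw [Phi]
      have hfun : (fun t : Fin (m+2) => ⁅(fun j => Agf g j) t, Pg (fun j => Agf g j)⁆ ^ (t : ℕ))
          = fun t => (⁅g t, Pg g⁆ ^ (t : ℕ))⁻¹ := by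
        funext t
        obtain ⟨d, hd, he⟩ := F5 hK hcomm g t
        rw [show (fun j => Agf g j) t = Agf g t from rfl, he, hPh,
          comm_mul_left hK hcomm, comm_mul_left hK hcomm, comm_Kleft hK hcomm hd, mul_one,
          comm_mul_right hK hcomm, comm_self hK hcomm, one_mul,
          comm_Kright hK hcomm _ hΦK, one_mul,
          comm_inv_left hK hcomm, comm_mul_right hK hcomm, comm_Kright hK hcomm _ hΦK,
          mul_one, inv_pow]
      rw [hfun, LK3 hK (fun t => pow_mem (hcomm _ _) _)]
      rfl
    have hSh : Pg (fun j => Agf g j) * Sg (fun j => Agf g j)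
        = Pg (fun j => Agf g j) ^ (m+2) * Phi (fun j => Agf g j) := Sigma hK hcomm _
    have hSgh : Sg (fun j => Agf g j) = Pg g := by
      have hPow : Pg (fun j => Agf g j) ^ (m+2) = Pg g * Pg g * (Phi g * Phi g) := by
        rw [hPh, ((kCommute hK hΦK (Pg g)).symm).mul_pow (m+2), pow_succ (Pg g) (m+1),
          pow_succ (Pg g) m, hPm, one_mul, pow_succ (Phi g) (m+1), pow_succ (Phi g) m,
          hΦm, one_mul]
      have h1 : Pg (fun j => Agf g j) * Sg (fun j => Agf g j)
          = Pg (fun j => Agf g j) * Pg g := by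
        rw [hSh, hPow, hPhih, hPh, mul_assoc (Pg g) (Phi g) (Pg g), kcomm hK hΦK (Pg g)]
        group
      exact mul_left_cancel h1
    have hwK : ∀ k, Agf (fun j => Agf g j) k * (g k)⁻¹ ∈ K := fun k => by
      obtain ⟨d₁, hd₁, he₁⟩ := F5 hK hcomm g k
      obtain ⟨d₂, hd₂, he₂⟩ := F5 hK hcomm (fun j => Agf g j) k
      have key : Agf (fun j => Agf g j) k * (g k)⁻¹
          = (Phi g * d₁⁻¹ * d₂) * (Pg g * g k * (Pg g)⁻¹ * (g k)⁻¹) := by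
        rw [he₂, hPh, he₁, mul_inv_rev, mul_inv_rev, inv_inv]
        calc Pg g * Phi g * (d₁⁻¹ * (g k * (Pg g)⁻¹)) * d₂ * (g k)⁻¹
            = Pg g * (Phi g * d₁⁻¹) * (g k * (Pg g)⁻¹ * (d₂ * (g k)⁻¹)) := by group
          _ = (Phi g * d₁⁻¹) * Pg g * (g k * (Pg g)⁻¹ * (d₂ * (g k)⁻¹)) := by
              rw [← kcomm hK (mul_mem hΦK (inv_mem hd₁)) (Pg g)]
          _ = (Phi g * d₁⁻¹) * ((Pg g * (g k * (Pg g)⁻¹)) * d₂) * (g k)⁻¹ := by group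
          _ = (Phi g * d₁⁻¹) * (d₂ * (Pg g * (g k * (Pg g)⁻¹))) * (g k)⁻¹ := by
              rw [← kcomm hK hd₂ (Pg g * (g k * (Pg g)⁻¹))]
          _ = (Phi g * d₁⁻¹ * d₂) * (Pg g * g k * (Pg g)⁻¹ * (g k)⁻¹) := by group
      rw [key]
      exact mul_mem (mul_mem (mul_mem hΦK (inv_mem hd₁)) hd₂)
        (by rw [← commutatorElement_def]; exact hcomm _ _)
    constructor
    · intro i
      have h2 : (A (A g) * g⁻¹) i = Agf (fun j => Agf g j) i * (g i)⁻¹ := by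
        rw [Pi.mul_apply, Pi.inv_apply, hAAg i]
      rw [h2]
      exact hwK i
    · rw [show (A (A g) * g⁻¹) = fun k => Agf (fun j => Agf g j) k * (g k)⁻¹ from
        funext fun i => by rw [Pi.mul_apply, Pi.inv_apply, hAAg i],
        Lfactor hK _ _ hwK,
        show (List.ofFn fun k => Agf (fun j => Agf g j) k).prod = Sg (fun j => Agf g j)
          from rfl,
        hSgh]
      exact mul_inv_cancel _
  · -- Part 3 : A fixes the image of K pointwise modulo Z
    intro k hk
    rw [hZ]
    set F : Fin (m+2) → G := Pi.mulSingle 0 k with hF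
    have hfK : ∀ i, F i ∈ K := fun i => by
      rcases eq_or_ne i 0 with h | h
      · rw [h, hF, Pi.mulSingle_eq_same]; exact hk
      · rw [hF, Pi.mulSingle_eq_of_ne h]; exact one_mem K
    have hf0 : F 0 = k := by rw [hF, Pi.mulSingle_eq_same]
    have hfs : ∀ i : Fin (m+1), F i.succ = 1 := fun i => by
      rw [hF, Pi.mulSingle_eq_of_ne (Fin.succ_ne_zero i)]
    have hPf : Pg F = k := by
      rw [Pg_succ, hf0,
        show (F ∘ Fin.succ) = fun _ : Fin (m+1) => (1:G) from funext fun i => hfs i]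
      simp [Pg]
    have hAf : ∀ j, Agf F j = k * (F j)⁻¹ := fun j => by
      have h1 := LcA hK hfK j
      rw [hPf] at h1
      exact eq_mul_inv_of_mul_eq h1
    constructor
    · intro i
      have h2 : A F i = Agf F i := hA _ i
      rw [Pi.mul_apply, Pi.inv_apply, h2, hAf i]
      exact mul_mem (mul_mem hk (inv_mem (hfK i))) (inv_mem (hfK i))
    · have hfn : (A F * F⁻¹) = fun j : Fin (m+2) => if j = 0 then k⁻¹ else k := by
        funext j
        have h2 : A F j = Agf F j := hA _ j
        rw [Pi.mul_apply, Pi.inv_apply, h2, hAf j]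
        rcases eq_or_ne j 0 with h | h
        · rw [if_pos h, h, hf0]; group
        · rw [if_neg h, hF, Pi.mulSingle_eq_of_ne h]; group
      have hhead : (fun j : Fin (m+2) => if j = 0 then k⁻¹ else k) 0 = k⁻¹ := if_pos rfl
      have htail : ((fun j : Fin (m+2) => if j = 0 then k⁻¹ else k) ∘ Fin.succ)
          = fun _ : Fin (m+1) => k := funext fun i => by
        show (if i.succ = (0 : Fin (m+2)) then k⁻¹ else k) = k
        rw [if_neg (Fin.succ_ne_zero i)]
      rw [hfn, prod_ofFn_succ (fun j : Fin (m+2) => if j = 0 then k⁻¹ else k),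
        if_pos (rfl : (0 : Fin (m+2)) = 0), htail,
        List.ofFn_const, List.prod_replicate, pow_succ', ← mul_assoc, inv_mul_cancel,
        one_mul, hexp k]
end

section
/- With notation as in the central product construction (G class-2 nilpotent of exponent m, G' ≤ K ≤ Z(G), M = m+2), the induced automorphism β* of Γ_M sends the class of (g,1,...,1) to the class of (1,g,...,g) for every g ∈ G. -/
open commutatorElement

/-- The induced automorphism `β*` of `Γ_M` (`M = m + 2`) sends the class of
`(g,1,...,1)` to the class of `(1,g,...,g)`. -/
theorem apps_beta_on_first_coordinate {G : Type*} [Group G] (m : ℕ)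
    (hexp : ∀ g : G, g ^ m = 1)
    (K : Subgroup G) (hK : K ≤ Subgroup.center G)
    (hcomm : ∀ x y : G, ⁅x, y⁆ ∈ K)
    (A : (Fin (m + 2) → G) → (Fin (m + 2) → G))
    (hA : ∀ (g : Fin (m + 2) → G) (j : Fin (m + 2)),
      A g j = (List.ofFn (fun i : Fin (m + 2) => if j = i then 1 else g i)).prod)
    (Z : Set (Fin (m + 2) → G))
    (hZ : Z = {f : Fin (m + 2) → G | (∀ i, f i ∈ K) ∧ (List.ofFn f).prod = 1}) :
    ∀ g : G,
      A (Pi.mulSingle (0 : Fin (m + 2)) g)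
        * (fun j : Fin (m + 2) => if j = 0 then 1 else g)⁻¹ ∈ Z := by
  intro g
  have hAg : A (Pi.mulSingle (0 : Fin (m + 2)) g)
      = fun j : Fin (m + 2) => if j = 0 then 1 else g := by
    funext j
    rw [hA]
    by_cases hj : j = 0
    · subst hj
      simp only [if_pos rfl]
      apply List.prod_eq_one
      intro x hx
      rw [List.mem_ofFn] at hx
      obtain ⟨i, rfl⟩ := hx
      by_cases hi : (0 : Fin (m + 2)) = i
      · simp [hi]
      · simp only [if_neg hi, Pi.mulSingle_apply, if_neg (Ne.symm hi)]
    · simp only [if_neg hj]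
      have hfun : (fun i : Fin (m + 2) => if j = i then (1 : G) else (Pi.mulSingle (0 : Fin (m + 2)) g : Fin (m + 2) → G) i)
          = (Pi.mulSingle (0 : Fin (m + 2)) g : Fin (m + 2) → G) := by
        funext i
        by_cases hji : j = i
        · subst hji
          simp [Pi.mulSingle_apply, hj]
        · simp [hji]
      have : (List.ofFn fun i : Fin (m + 1) =>
          (Pi.mulSingle (0 : Fin (m + 2)) g : Fin (m + 2) → G) i.succ).prod = 1 := by
        apply List.prod_eq_one
        intro x hx
        rw [List.mem_ofFn] at hx
        obtain ⟨i, rfl⟩ := hx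
        simp [Pi.mulSingle_apply, Fin.succ_ne_zero]
      rw [hfun, List.ofFn_succ, List.prod_cons, this, mul_one]
      simp [Pi.mulSingle_apply]
  rw [hAg, hZ]
  constructor
  · intro i
    simp [K.one_mem]
  · have : ((fun j : Fin (m + 2) => if j = 0 then 1 else g) *
        (fun j : Fin (m + 2) => if j = 0 then 1 else g)⁻¹ : Fin (m + 2) → G) = 1 := by
      simp
    rw [this]
    apply List.prod_eq_one
    intro x hx
    rw [List.mem_ofFn] at hx
    obtain ⟨i, rfl⟩ := hx
    rfl
end
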